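/- arXiv:1302.0213 — 2 statements merged into one kernel-verified Lean document; each statement's English description precedes it below -/
import Mathlib

section
/- Let X be a finite indecomposable quandle. Then the enveloping group G_X is isoclinic to the finite enveloping group Ḡ_X. -/
open Quandles
open scoped commutatorElement

/-- The inner group of a rack: the subgroup of permutations generated by the
translations `φᵢ = (i ◃ ·)`. -/
def quandleInn (X : Type) [Rack X] : Subgroup (Equiv.Perm X) :=
  Subgroup.closure (Set.range (fun i : X => Rack.act' i))

/-- A quandle is indecomposable if its inner group acts transitively. -/
def QuandleIndecomposable (X : Type) [Rack X] : Prop :=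
  ∀ x y : X, ∃ f ∈ quandleInn X, f x = y

/-- The kernel of the projection from the enveloping group of a quandle to its finite
enveloping group: the normal closure of the set of elements `x_i ^ |φᵢ|`. -/
def envelKer (X : Type) [Quandle X] : Subgroup (Rack.EnvelGroup X) :=
  Subgroup.normalClosure
    {w | ∃ i : X, w = (Rack.toEnvelGroup X i : Rack.EnvelGroup X) ^ orderOf (Rack.act' i)}

instance (X : Type) [Quandle X] : (envelKer X).Normal :=
  Subgroup.normalClosure_normal

theorem mem_commutator_of {G : Type} [Group G] (g₁ g₂ : G) : ⁅g₁, g₂⁆ ∈ commutator G := by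
  rw [commutator_def]
  exact Subgroup.commutator_mem_commutator (Subgroup.mem_top _) (Subgroup.mem_top _)

/-- Two groups are isoclinic. -/
def IsIsoclinic (G H : Type) [Group G] [Group H] : Prop :=
  ∃ (ζ : (G ⧸ Subgroup.center G) ≃* (H ⧸ Subgroup.center H))
    (η : (commutator G) ≃* (commutator H)),
    ∀ (g₁ g₂ : G) (h₁ h₂ : H),
      ζ ((g₁ : G) : G ⧸ Subgroup.center G) = ((h₁ : H) : H ⧸ Subgroup.center H) →
      ζ ((g₂ : G) : G ⧸ Subgroup.center G) = ((h₂ : H) : H ⧸ Subgroup.center H) →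
      η ⟨⁅g₁, g₂⁆, mem_commutator_of g₁ g₂⟩ = ⟨⁅h₁, h₂⁆, mem_commutator_of h₁ h₂⟩

/-! If `K ⊴ G` meets `[G, G]` trivially, the projection `G → G/K` identifies `G/Z(G)` with
`(G/K)/Z(G/K)` and maps `[G, G]` isomorphically onto `[G/K, G/K]`; since commutators only depend
on their arguments modulo the centre, these isomorphisms form an isoclinism.

In `G_X` one has `g x_j g⁻¹ = x_{g·j}`, so the kernel of the action of `G_X` on `X` is central.
Hence `x_i ^ Nᵢ` is central, and it is invariant under conjugation, so it is constant along orbits: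
for indecomposable `X` all the generators of `K` equal one central element `z`, and `K ≤ ⟨z⟩`.
The degree map `G_X → ℤ`, `x_i ↦ 1`, vanishes on `[G_X, G_X]` but sends `z` to `Nᵢ > 0`, so it is
injective on `⟨z⟩`, and `K ∩ [G_X, G_X] = 1`. -/

open Subgroup

section

variable {G : Type} [Group G]

theorem commutatorElement_eq_of_mk_center_eq {a b c d : G}
    (hac : (a : G ⧸ center G) = c) (hbd : (b : G ⧸ center G) = d) : ⁅a, b⁆ = ⁅c, d⁆ := by
  obtain ⟨z, hz, rfl⟩ : ∃ z ∈ center G, c = a * z := ⟨a⁻¹ * c, QuotientGroup.eq.mp hac, by group⟩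
  obtain ⟨w, hw, rfl⟩ : ∃ w ∈ center G, d = b * w := ⟨b⁻¹ * d, QuotientGroup.eq.mp hbd, by group⟩
  symm
  calc ⁅a * z, b * w⁆ = a * (z * (b * w)) * z⁻¹ * a⁻¹ * w⁻¹ * b⁻¹ := by
        rw [commutatorElement_def]; group
    _ = a * b * (w * a⁻¹) * w⁻¹ * b⁻¹ := by rw [← mem_center_iff.mp hz (b * w)]; group
    _ = ⁅a, b⁆ := by rw [← mem_center_iff.mp hw a⁻¹, commutatorElement_def]; group

theorem QuotientGroup.comap_mk'_center_eq_center {K : Subgroup G} [K.Normal]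
    (hK : Disjoint K (commutator G)) :
    (center (G ⧸ K)).comap (QuotientGroup.mk' K) = center G := by
  ext g
  simp only [mem_comap, QuotientGroup.mk'_apply, mem_center_iff]
  constructor
  · intro hg h
    have hgh : ⁅h, g⁆ ∈ K := by
      rw [← QuotientGroup.eq_one_iff, ← QuotientGroup.mk'_apply, map_commutatorElement,
        commutatorElement_eq_one_iff_mul_comm]
      exact hg h
    rw [← commutatorElement_eq_one_iff_mul_comm]
    exact disjoint_def.mp hK hgh (mem_commutator_of h g)
  · intro hg q
    induction q using QuotientGroup.induction_on with
    | H h => exact congrArg _ (hg h)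

theorem isIsoclinic_quotient_of_disjoint_commutator (K : Subgroup G) [K.Normal]
    (hK : Disjoint K (commutator G)) : IsIsoclinic G (G ⧸ K) := by
  set π := QuotientGroup.mk' K
  have hπ : Function.Surjective π := QuotientGroup.mk'_surjective K
  let f : G →* (G ⧸ K) ⧸ center (G ⧸ K) := (QuotientGroup.mk' _).comp π
  have hf : f.ker = center G := by
    rw [← MonoidHom.comap_ker, QuotientGroup.ker_mk', QuotientGroup.comap_mk'_center_eq_center hK]
  let ζ := (QuotientGroup.quotientMulEquivOfEq hf.symm).trans
    (QuotientGroup.quotientKerEquivOfSurjective f ((QuotientGroup.mk'_surjective _).comp hπ))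
  have hinj : Function.Injective (π.domRestrict (commutator G)) := by
    rw [injective_iff_map_eq_one]
    rintro ⟨x, hx⟩ h
    exact Subtype.ext (disjoint_def.mp hK ((QuotientGroup.eq_one_iff x).mp h) hx)
  have hrange : (π.domRestrict (commutator G)).range = commutator (G ⧸ K) := by
    rw [MonoidHom.domRestrict_range, commutator_def, map_commutator,
      map_top_of_surjective π hπ, commutator_def]
  let η := (MonoidHom.ofInjective hinj).trans (MulEquiv.subgroupCongr hrange)
  exact ⟨ζ, η, fun g₁ g₂ h₁ h₂ h1 h2 => Subtype.ext <|
    (map_commutatorElement π g₁ g₂).trans (commutatorElement_eq_of_mk_center_eq h1 h2)⟩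

theorem Subgroup.disjoint_zpowers_ker {H : Type} [Group H] [IsMulTorsionFree H]
    {f : G →* H} {z : G} (hz : f z ≠ 1) : Disjoint (zpowers z) f.ker := by
  refine disjoint_def.mpr ?_
  rintro _ ⟨k, rfl⟩ hk
  rw [MonoidHom.mem_ker, map_zpow, IsMulTorsionFree.zpow_eq_one_iff_right hz] at hk
  simp [hk]

theorem Subgroup.normal_of_le_center {H : Subgroup G} (h : H ≤ center G) : H.Normal :=
  ⟨fun n hn g => by rwa [mem_center_iff.mp (h hn) g, mul_inv_cancel_right]⟩

end

namespace Rack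

variable {R : Type} [Rack R]

theorem closure_range_toEnvelGroup :
    closure (Set.range (toEnvelGroup R : R → EnvelGroup R)) = ⊤ := by
  refine eq_top_iff.mpr fun g _ => Quotient.inductionOn g fun a => ?_
  induction a with
  | unit => exact one_mem _
  | incl x => exact subset_closure ⟨x, rfl⟩
  | mul a b ha hb => exact mul_mem ha hb
  | inv a ha => exact inv_mem ha

theorem center_envelGroup_eq_centralizer :
    center (EnvelGroup R) = centralizer (Set.range (toEnvelGroup R : R → EnvelGroup R)) := by
  rw [← centralizer_univ, ← coe_top, ← closure_range_toEnvelGroup, centralizer_closure]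

theorem envelAction_toEnvelGroup (i : R) : envelAction (toEnvelGroup R i) = act' i := rfl

theorem range_envelAction : (envelAction : EnvelGroup R →* R ≃ R).range = quandleInn R := by
  rw [MonoidHom.range_eq_map, ← closure_range_toEnvelGroup, MonoidHom.map_closure,
    ← Set.range_comp]
  rfl

theorem conj_toEnvelGroup (g : EnvelGroup R) (j : R) :
    g * toEnvelGroup R j * g⁻¹ = toEnvelGroup R (envelAction g j) := by
  have hg : g ∈ closure (Set.range (toEnvelGroup R : R → EnvelGroup R)) :=
    closure_range_toEnvelGroup (R := R) ▸ mem_top g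
  induction hg using Subgroup.closure_induction generalizing j with
  | mem _ hx =>
    obtain ⟨i, rfl⟩ := hx
    exact ((toEnvelGroup R).map_act' (x := i) (y := j)).symm
  | one => simp
  | mul x y _ _ hx hy => rw [map_mul, Equiv.Perm.mul_apply, ← hx, ← hy]; group
  | inv x _ hx =>
    have := hx (envelAction x⁻¹ j)
    rw [← Equiv.Perm.mul_apply, ← map_mul, mul_inv_cancel, map_one, Equiv.Perm.one_apply] at this
    rw [← this]
    group

theorem ker_envelAction_le_center :
    (envelAction : EnvelGroup R →* R ≃ R).ker ≤ center (EnvelGroup R) := by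
  intro g hg
  rw [center_envelGroup_eq_centralizer, mem_centralizer_iff]
  rintro _ ⟨j, rfl⟩
  have hconj := conj_toEnvelGroup g j
  rw [hg, Equiv.Perm.one_apply, mul_inv_eq_iff_eq_mul] at hconj
  exact hconj.symm

theorem pow_orderOf_envelAction_mem_center (g : EnvelGroup R) :
    g ^ orderOf (envelAction g) ∈ center (EnvelGroup R) :=
  ker_envelAction_le_center (by rw [MonoidHom.mem_ker, map_pow, pow_orderOf_eq_one])

theorem conj_pow_orderOf_envelAction (a g : EnvelGroup R) :
    (a * g * a⁻¹) ^ orderOf (envelAction (a * g * a⁻¹)) = g ^ orderOf (envelAction g) := by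
  have hord : orderOf (envelAction (a * g * a⁻¹)) = orderOf (envelAction g) := by
    rw [map_mul, map_mul, map_inv, ← MulAut.conj_apply, MulEquiv.orderOf_eq]
  rw [hord, conj_pow, mem_center_iff.mp (pow_orderOf_envelAction_mem_center g) a,
    mul_inv_cancel_right]

theorem toEnvelGroup_pow_orderOf_act'_eq_of_indecomposable (hind : QuandleIndecomposable R)
    (i j : R) :
    (toEnvelGroup R i : EnvelGroup R) ^ orderOf (act' i) = toEnvelGroup R j ^ orderOf (act' j) := by
  obtain ⟨_, hf, rfl⟩ := hind i j
  obtain ⟨g, rfl⟩ := range_envelAction (R := R) ▸ hf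
  rw [← envelAction_toEnvelGroup (envelAction g i), ← conj_toEnvelGroup,
    conj_pow_orderOf_envelAction, envelAction_toEnvelGroup]

def EnvelGroup.degree : EnvelGroup R →* Multiplicative ℤ :=
  toEnvelGroup.map ⟨fun _ => Multiplicative.ofAdd 1, by simp⟩

theorem EnvelGroup.degree_toEnvelGroup (i : R) :
    EnvelGroup.degree (toEnvelGroup R i) = Multiplicative.ofAdd 1 := rfl

end Rack

section FiniteEnvelopingGroup

open Rack

variable {X : Type} [Quandle X]

theorem envelKer_le_zpowers (hind : QuandleIndecomposable X) (i : X) :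
    envelKer X ≤ zpowers ((toEnvelGroup X i : EnvelGroup X) ^ orderOf (act' i)) := by
  have : (zpowers ((toEnvelGroup X i : EnvelGroup X) ^ orderOf (act' i))).Normal :=
    normal_of_le_center (zpowers_le.mpr (pow_orderOf_envelAction_mem_center _))
  refine normalClosure_le_normal ?_
  rintro _ ⟨j, rfl⟩
  rw [toEnvelGroup_pow_orderOf_act'_eq_of_indecomposable hind j i]
  exact mem_zpowers _

theorem disjoint_envelKer_commutator [Finite X] (hind : QuandleIndecomposable X) :
    Disjoint (envelKer X) (commutator (EnvelGroup X)) := by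
  cases isEmpty_or_nonempty X with
  | inl _ =>
    have : envelKer X = ⊥ := by simp [envelKer]
    simp [this]
  | inr h =>
    obtain ⟨i⟩ := h
    refine (disjoint_zpowers_ker ?_).mono (envelKer_le_zpowers hind i)
      (Abelianization.commutator_subset_ker EnvelGroup.degree)
    rw [map_pow, EnvelGroup.degree_toEnvelGroup, ← ofAdd_nsmul]
    simp [(orderOf_pos (act' i)).ne']

end FiniteEnvelopingGroup

theorem stmt14 (X : Type) [Quandle X] [Finite X] (hind : QuandleIndecomposable X) :
    IsIsoclinic (Rack.EnvelGroup X) (Rack.EnvelGroup X ⧸ envelKer X) :=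
  isIsoclinic_quotient_of_disjoint_commutator _ (disjoint_envelKer_commutator hind)
end

section
/- Let G_D be the enveloping group of the dihedral quandle on three elements, that is of ℤ/3ℤ with operation i ▷ j = 2i - j. Then the direct product ℤ × G_D is isomorphic to Γ₃. -/
/-- The defining relations of the group
`Γₙ = ⟨g, h, ε ∣ hg = εgh, gε = ε⁻¹g, hε = εh, εⁿ = 1⟩`,
with generators `0 ↦ g`, `1 ↦ h`, `2 ↦ ε`. -/
def GammaRels (n : ℕ) : Set (FreeGroup (Fin 3)) :=
  { FreeGroup.of 1 * FreeGroup.of 0 * (FreeGroup.of 2 * FreeGroup.of 0 * FreeGroup.of 1)⁻¹,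
    FreeGroup.of 0 * FreeGroup.of 2 * ((FreeGroup.of 2)⁻¹ * FreeGroup.of 0)⁻¹,
    FreeGroup.of 1 * FreeGroup.of 2 * (FreeGroup.of 2 * FreeGroup.of 1)⁻¹,
    (FreeGroup.of 2) ^ n }

/-- The group `Γₙ = ⟨g, h, ε ∣ hg = εgh, gε = ε⁻¹g, hε = εh, εⁿ = 1⟩`. -/
def Gamma (n : ℕ) : Type := PresentedGroup (GammaRels n)

instance (n : ℕ) : Group (Gamma n) := inferInstanceAs (Group (PresentedGroup (GammaRels n)))

/-!
In `G_D` the square of a generator `xᵢ` commutes with every `xⱼ`, and since `3` is odd all the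
squares coincide; hence `xᵢ xⱼ⁻¹ xᵢ = x_{2i-j}` and `(x₁ x₀⁻¹)³ = 1`. In `Γ₃` the elements `εⁱ g`
satisfy the dihedral relations and, because `ε³ = 1`, `εh` is central. So `(m, xᵢ) ↦ (εh)ᵐ εⁱ g`
is a homomorphism `ℤ × G_D → Γ₃`; the identities above in `G_D` are exactly what is needed for
`g ↦ (0, x₀)`, `h ↦ (1, x₀ x₁⁻¹)`, `ε ↦ (0, x₁ x₀⁻¹)` to define its inverse.
-/

open Rack Quandle Quandles

theorem Rack.EnvelGroup.hom_ext {R : Type*} [Rack R] {G : Type*} [Group G]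
    {F₁ F₂ : EnvelGroup R →* G} (h : ∀ x, F₁ (toEnvelGroup R x) = F₂ (toEnvelGroup R x)) :
    F₁ = F₂ :=
  toEnvelGroup.map.symm.injective (ShelfHom.ext (funext h))

namespace Quandle.Dihedral

variable {n : ℕ}

def gen (n : ℕ) (i : ZMod n) : EnvelGroup (Dihedral n) := toEnvelGroup (Dihedral n) i

theorem gen_act (i j : ZMod n) : gen n (2 * i - j) = gen n i * gen n j * (gen n i)⁻¹ := by
  have h := (toEnvelGroup (Dihedral n)).map_act (x := i) (y := j)
  rwa [conj_act_eq_conj] at h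

theorem commute_gen_sq (i j : ZMod n) : Commute (gen n i ^ 2) (gen n j) := by
  have h := gen_act i (2 * i - j)
  rw [sub_sub_cancel, gen_act i j] at h
  calc gen n i ^ 2 * gen n j
      = gen n i * (gen n i * gen n j * (gen n i)⁻¹) * (gen n i)⁻¹ * gen n i ^ 2 := by
        rw [sq]; group
    _ = gen n j * gen n i ^ 2 := by rw [← h]

theorem gen_act_sq (i j : ZMod n) : gen n (2 * i - j) ^ 2 = gen n j ^ 2 := by
  rw [gen_act, conj_pow, ((commute_gen_sq j i).symm).eq]
  group

-- As `2` is a unit mod `n`, `i = 2k - j` for `k = (i + j) / 2`.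
theorem gen_sq_eq_of_odd (hn : Odd n) (i j : ZMod n) : gen n i ^ 2 = gen n j ^ 2 := by
  have h2 : (2 : ZMod n) * 2⁻¹ = 1 := by
    exact_mod_cast ZMod.coe_mul_inv_eq_one 2 hn.coprime_two_left
  have := gen_act_sq ((i + j) * 2⁻¹) j
  rwa [mul_left_comm, h2, mul_one, add_sub_cancel_right] at this

theorem gen_mul_inv_mul_of_odd (hn : Odd n) (i j : ZMod n) :
    gen n i * (gen n j)⁻¹ * gen n i = gen n (2 * i - j) := by
  have hinv : (gen n j)⁻¹ = gen n j * (gen n i ^ 2)⁻¹ := by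
    rw [gen_sq_eq_of_odd hn i j]; group
  rw [gen_act, hinv]
  group

end Quandle.Dihedral

namespace Gamma

variable {n : ℕ}

def g (n : ℕ) : Gamma n := PresentedGroup.of 0
def h (n : ℕ) : Gamma n := PresentedGroup.of 1
def ε (n : ℕ) : Gamma n := PresentedGroup.of 2

theorem h_mul_g : h n * g n = ε n * g n * h n :=
  PresentedGroup.mk_eq_mk_of_mul_inv_mem (.inl rfl)

theorem g_mul_ε : g n * ε n = (ε n)⁻¹ * g n :=
  PresentedGroup.mk_eq_mk_of_mul_inv_mem (.inr (.inl rfl))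

theorem h_mul_ε : h n * ε n = ε n * h n :=
  PresentedGroup.mk_eq_mk_of_mul_inv_mem (.inr (.inr (.inl rfl)))

theorem ε_pow : ε n ^ n = 1 :=
  PresentedGroup.one_of_mem (.inr (.inr (.inr rfl)))

def εPow (n : ℕ) (z : ZMod n) : Gamma n := ε n ^ z.val

variable [NeZero n]

theorem εPow_add (y z : ZMod n) : εPow n (y + z) = εPow n y * εPow n z := by
  rw [εPow, ZMod.val_add, ← pow_eq_pow_mod _ ε_pow, pow_add, εPow, εPow]

theorem εPow_neg (z : ZMod n) : εPow n (-z) = (εPow n z)⁻¹ := by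
  rw [eq_inv_iff_mul_eq_one, ← εPow_add, neg_add_cancel, εPow, ZMod.val_zero, pow_zero]

theorem g_mul_εPow (z : ZMod n) : g n * εPow n z = εPow n (-z) * g n := by
  rw [εPow_neg, εPow, ← inv_pow]
  exact (SemiconjBy.pow_right g_mul_ε z.val : _)

theorem εPow_two_mul_sub_mul_g (i j : ZMod n) :
    εPow n (2 * i - j) * g n
      = εPow n i * g n * (εPow n j * g n) * (εPow n i * g n)⁻¹ := by
  have hi : g n * εPow n (-i) = εPow n i * g n := by rw [g_mul_εPow, neg_neg]
  calc εPow n (2 * i - j) * g n = εPow n i * εPow n (-j) * (εPow n i * g n) := by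
        rw [two_mul, sub_eq_add_neg, add_right_comm, εPow_add, εPow_add, mul_assoc]
    _ = εPow n i * (εPow n (-j) * g n) * εPow n (-i) := by rw [← hi]; group
    _ = εPow n i * (g n * εPow n j) * (εPow n i)⁻¹ := by
        rw [g_mul_εPow, εPow_neg, εPow_neg]
    _ = _ := by group

def dihedralToConj (n : ℕ) [NeZero n] : Dihedral n →◃ Conj (Gamma n) where
  toFun i := εPow n i * g n
  map_act' {i j} := εPow_two_mul_sub_mul_g i j

theorem ε_mul_h_mem_center : ε 3 * h 3 ∈ Subgroup.center (Gamma 3) := by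
  have hε : (ε 3)⁻¹ = ε 3 * ε 3 := by
    rw [inv_eq_iff_mul_eq_one, ← mul_assoc, ← pow_three', ε_pow]
  refine Subgroup.mem_center_iff.mpr fun x => Subgroup.mem_centralizer_singleton_iff.mp <|
    PresentedGroup.generated_by _ (Subgroup.centralizer {ε 3 * h 3}) (fun j => ?_) x
  apply Subgroup.mem_centralizer_singleton_iff.mpr
  fin_cases j
  · change g 3 * (ε 3 * h 3) = ε 3 * h 3 * g 3
    rw [← mul_assoc, g_mul_ε, hε, mul_assoc (ε 3) (h 3), h_mul_g]; group
  · change h 3 * (ε 3 * h 3) = ε 3 * h 3 * h 3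
    rw [← mul_assoc, h_mul_ε]
  · change ε 3 * (ε 3 * h 3) = ε 3 * h 3 * ε 3
    rw [mul_assoc, h_mul_ε]

open Quandle.Dihedral

noncomputable def ofProdEnvel : Multiplicative ℤ × EnvelGroup (Dihedral 3) →* Gamma 3 :=
  (zpowersHom (Gamma 3) (ε 3 * h 3)).noncommCoprod (toEnvelGroup.map (dihedralToConj 3))
    fun _ _ => (Subgroup.mem_center_iff.mp (Subgroup.zpow_mem _ ε_mul_h_mem_center _) _).symm

noncomputable def toProdEnvelGen : Fin 3 → Multiplicative ℤ × EnvelGroup (Dihedral 3) :=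
  ![(1, gen 3 0), (.ofAdd 1, gen 3 0 * (gen 3 1)⁻¹), (1, gen 3 1 * (gen 3 0)⁻¹)]

theorem lift_toProdEnvelGen_eq_one : ∀ r ∈ GammaRels 3, FreeGroup.lift toProdEnvelGen r = 1 := by
  have hab : gen 3 0 * gen 3 1 * (gen 3 0)⁻¹ = gen 3 2 := (gen_act 0 1).symm
  have hba : gen 3 1 * gen 3 0 * (gen 3 1)⁻¹ = gen 3 2 := (gen_act 1 0).symm
  have hab' : gen 3 0 * (gen 3 1)⁻¹ * gen 3 0 = gen 3 2 := gen_mul_inv_mul_of_odd ⟨1, rfl⟩ 0 1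
  have hba' : gen 3 1 * (gen 3 0)⁻¹ * gen 3 1 = gen 3 2 := gen_mul_inv_mul_of_odd ⟨1, rfl⟩ 1 0
  rintro r (rfl | rfl | rfl | rfl) <;>
    simp only [map_mul, map_inv, map_pow, FreeGroup.lift_apply_of, mul_inv_eq_one] <;>
    refine Prod.ext (by simp [toProdEnvelGen]) ?_ <;>
    simp only [toProdEnvelGen, Matrix.cons_val, Prod.snd_mul, Prod.snd_inv, Prod.pow_snd]
  · rw [hab', ← hba]; group
  · rw [← mul_assoc, hab, ← hab']; group
  · group
  · calc (gen 3 1 * (gen 3 0)⁻¹) ^ 3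
        = gen 3 1 * (gen 3 0)⁻¹ * gen 3 1 * (gen 3 0 * (gen 3 1)⁻¹ * gen 3 0)⁻¹ := by
          rw [pow_three]; group
      _ = 1 := by rw [hab', hba', mul_inv_cancel]

noncomputable def toProdEnvel : Gamma 3 →* Multiplicative ℤ × EnvelGroup (Dihedral 3) :=
  PresentedGroup.toGroup lift_toProdEnvelGen_eq_one

theorem toProdEnvel_g : toProdEnvel (g 3) = (1, gen 3 0) := PresentedGroup.toGroup.of _

theorem toProdEnvel_h : toProdEnvel (h 3) = (.ofAdd 1, gen 3 0 * (gen 3 1)⁻¹) :=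
  PresentedGroup.toGroup.of _

theorem toProdEnvel_ε : toProdEnvel (ε 3) = (1, gen 3 1 * (gen 3 0)⁻¹) :=
  PresentedGroup.toGroup.of _

theorem ofProdEnvel_apply (m : Multiplicative ℤ) (u : EnvelGroup (Dihedral 3)) :
    ofProdEnvel (m, u) = (ε 3 * h 3) ^ m.toAdd * toEnvelGroup.map (dihedralToConj 3) u := rfl

theorem toProdEnvel_ε_mul_h : toProdEnvel (ε 3 * h 3) = (.ofAdd 1, 1) := by
  rw [map_mul, toProdEnvel_ε, toProdEnvel_h]
  ext <;> simp

theorem toProdEnvel_comp_map_dihedralToConj :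
    toProdEnvel.comp (toEnvelGroup.map (dihedralToConj 3)) = MonoidHom.inr _ _ := by
  refine EnvelGroup.hom_ext fun (i : ZMod 3) => ?_
  change toProdEnvel (ε 3 ^ i.val * g 3) = (1, gen 3 i)
  fin_cases i
  · change toProdEnvel (ε 3 ^ 0 * g 3) = (1, gen 3 0)
    rw [pow_zero, one_mul, toProdEnvel_g]
  · change toProdEnvel (ε 3 ^ 1 * g 3) = (1, gen 3 1)
    rw [map_mul, pow_one, toProdEnvel_ε, toProdEnvel_g]
    ext <;> simp
  · change toProdEnvel (ε 3 ^ 2 * g 3) = (1, gen 3 2)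
    have hba' : gen 3 1 * (gen 3 0)⁻¹ * gen 3 1 = gen 3 2 := gen_mul_inv_mul_of_odd ⟨1, rfl⟩ 1 0
    rw [map_mul, map_pow, toProdEnvel_ε, toProdEnvel_g, ← hba']
    ext
    · simp
    · simp only [Prod.snd_mul, sq]; group

theorem toProdEnvel_comp_ofProdEnvel : toProdEnvel.comp ofProdEnvel = MonoidHom.id _ := by
  ext ⟨m, u⟩ : 1
  have hu : toProdEnvel (toEnvelGroup.map (dihedralToConj 3) u) = (1, u) :=
    DFunLike.congr_fun toProdEnvel_comp_map_dihedralToConj u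
  rw [MonoidHom.comp_apply, ofProdEnvel_apply, map_mul, map_zpow, toProdEnvel_ε_mul_h, hu]
  ext <;> simp

theorem ofProdEnvel_comp_toProdEnvel : ofProdEnvel.comp toProdEnvel = MonoidHom.id _ := by
  refine PresentedGroup.ext fun j => ?_
  fin_cases j
  · change ofProdEnvel (toProdEnvel (g 3)) = g 3
    rw [toProdEnvel_g, ofProdEnvel_apply]
    change (ε 3 * h 3) ^ (0 : ℤ) * (ε 3 ^ 0 * g 3) = g 3
    group
  · change ofProdEnvel (toProdEnvel (h 3)) = h 3
    rw [toProdEnvel_h, ofProdEnvel_apply, map_mul, map_inv]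
    change (ε 3 * h 3) ^ (1 : ℤ) * (ε 3 ^ 0 * g 3 * (ε 3 ^ 1 * g 3)⁻¹) = h 3
    rw [mul_assoc, ← h_mul_ε]
    group
  · change ofProdEnvel (toProdEnvel (ε 3)) = ε 3
    rw [toProdEnvel_ε, ofProdEnvel_apply, map_mul, map_inv]
    change (ε 3 * h 3) ^ (0 : ℤ) * (ε 3 ^ 1 * g 3 * (ε 3 ^ 0 * g 3)⁻¹) = ε 3
    group

end Gamma

theorem stmt16 :
    Nonempty ((Multiplicative ℤ × Rack.EnvelGroup (Quandle.Dihedral 3)) ≃* Gamma 3) :=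
  ⟨Gamma.ofProdEnvel.toMulEquiv Gamma.toProdEnvel Gamma.toProdEnvel_comp_ofProdEnvel
    Gamma.ofProdEnvel_comp_toProdEnvel⟩
end
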